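/- arXiv:2402.05173 — 3 statements merged into one kernel-verified Lean document; each statement's English description precedes it below -/
import Mathlib

section
/- For every k with 0 ≤ k ≤ min{d, n−d}, there exists a multilinear monomial of degree d in n variables that does not vanish under the Young symmetrizer of the canonical standard Young tableau of shape (n−k, k); in particular, the monomial M = x_1 x_2 ··· x_d works. -/
/-- The row group of the canonical standard Young tableau of shape `(n-k, k)`:
permutations preserving the two rows `{0, …, n-k-1}` and `{n-k, …, n-1}`. -/
def rowGroup (n k : ℕ) : Finset (Equiv.Perm (Fin n)) :=
  Finset.univ.filter fun σ => ∀ i : Fin n, ((σ i : ℕ) < n - k ↔ (i : ℕ) < n - k)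

/-- The column of an entry of the canonical tableau of shape `(n-k, k)`:
the first row has entries `0, …, n-k-1` in columns `0, …, n-k-1`, and the second
row has entries `n-k, …, n-1` in columns `0, …, k-1`. -/
def canonCol (n k : ℕ) (i : Fin n) : ℕ :=
  if (i : ℕ) < n - k then (i : ℕ) else (i : ℕ) - (n - k)

/-- The column group of the canonical tableau of shape `(n-k, k)`. -/
def colGroup (n k : ℕ) : Finset (Equiv.Perm (Fin n)) :=
  Finset.univ.filter fun σ => ∀ i : Fin n, canonCol n k (σ i) = canonCol n k i


/-!
Look at the coefficient of the monomial `x_D`, `D = {0, …, d-1}`, in `Ĉ R̂ x_D`.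
A term `sign c · (c r) x_D` contributes to it only if `c r` maps `D` onto `D`.
Since `d ≤ n - k`, the set `D` lies in the first row, so `r D` does too, and a column
permutation sending a first-row entry to a first-row entry fixes it; hence `c` fixes
`D` pointwise. As `k ≤ d`, `D` contains the top entry of every column of height two,
which forces `c = 1`. The coefficient is therefore the number of row permutations
stabilising `D`, which is positive.
-/

open MvPolynomial Finset

section Multilinear

variable {σ τ R : Type*} [CommSemiring R]

lemma sum_single_one_injective :
    Function.Injective fun S : Finset σ => ∑ i ∈ S, Finsupp.single i (1 : ℕ) := by
  classical
  intro S T h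
  ext j
  have hj := DFunLike.congr_fun h j
  simp only [Finsupp.finsetSum_apply, Finsupp.single_apply, sum_ite_eq'] at hj
  split_ifs at hj <;> simp_all

lemma prod_X_eq_monomial (S : Finset σ) :
    (∏ i ∈ S, X i : MvPolynomial σ R) = monomial (∑ i ∈ S, Finsupp.single i 1) 1 :=
  (monomial_sum_one S _).symm

lemma coeff_rename_prod_X [DecidableEq τ] {f : σ → τ} (hf : Function.Injective f)
    (S : Finset σ) (T : Finset τ) :
    coeff (∑ i ∈ T, Finsupp.single i 1) (rename f (∏ i ∈ S, X i : MvPolynomial σ R)) =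
      if S.image f = T then 1 else 0 := by
  rw [map_prod]
  simp only [rename_X]
  rw [← prod_image hf.injOn, prod_X_eq_monomial, coeff_monomial]
  exact if_congr sum_single_one_injective.eq_iff rfl rfl

end Multilinear

section Tableau

variable {n k : ℕ}

lemma one_mem_rowGroup : (1 : Equiv.Perm (Fin n)) ∈ rowGroup n k := by
  simp [rowGroup]

lemma one_mem_colGroup : (1 : Equiv.Perm (Fin n)) ∈ colGroup n k := by
  simp [colGroup]

lemma lt_of_mem_rowGroup {r : Equiv.Perm (Fin n)} (hr : r ∈ rowGroup n k) {i : Fin n}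
    (hi : (i : ℕ) < n - k) : (r i : ℕ) < n - k :=
  ((mem_filter.mp hr).2 i).mpr hi

lemma canonCol_apply_of_mem_colGroup {c : Equiv.Perm (Fin n)} (hc : c ∈ colGroup n k)
    (i : Fin n) : canonCol n k (c i) = canonCol n k i :=
  (mem_filter.mp hc).2 i

lemma apply_eq_self_of_mem_colGroup {c : Equiv.Perm (Fin n)} (hc : c ∈ colGroup n k)
    {i : Fin n} (hi : (i : ℕ) < n - k) (hci : (c i : ℕ) < n - k) : c i = i := by
  have h := canonCol_apply_of_mem_colGroup hc i
  rw [canonCol, canonCol, if_pos hi, if_pos hci] at h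
  exact Fin.ext h

/-- Columns `k, …, n-k-1` are singletons, and `0, …, k-1` are the tops of the columns of
height two. -/
lemma eq_one_of_mem_colGroup {c : Equiv.Perm (Fin n)} (hc : c ∈ colGroup n k)
    (hfix : ∀ i : Fin n, (i : ℕ) < k → c i = i) : c = 1 := by
  refine Equiv.ext fun x => ?_
  change c x = x
  have hx := canonCol_apply_of_mem_colGroup hc x
  have hcx := hfix (c x)
  have hxn := x.isLt
  have hcxn := (c x).isLt
  unfold canonCol at hx
  by_cases h : (x : ℕ) < k
  · exact hfix x h
  split_ifs at hx with h₁ h₂ h₂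
  · exact Fin.ext hx
  · have := congrArg Fin.val (c.injective (hcx (by omega)))
    omega
  · omega
  · exact Fin.ext (by omega)

lemma eq_one_of_image_eq {c r : Equiv.Perm (Fin n)} (hc : c ∈ colGroup n k)
    (hr : r ∈ rowGroup n k) {S : Finset (Fin n)} (hS : ∀ i ∈ S, (i : ℕ) < n - k)
    (hkS : ∀ i : Fin n, (i : ℕ) < k → i ∈ S) (h : S.image (c ∘ r) = S) : c = 1 := by
  have hfixS : ∀ i ∈ S, c (r i) = r i := fun i hi =>
    apply_eq_self_of_mem_colGroup hc (lt_of_mem_rowGroup hr (hS i hi))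
      (hS _ (h ▸ mem_image_of_mem _ hi))
  refine eq_one_of_mem_colGroup hc fun j hj => ?_
  obtain ⟨i, hi, rfl⟩ := mem_image.mp (h.symm ▸ hkS j hj)
  simp only [Function.comp_apply, hfixS i hi]

lemma coeff_youngSymmetrizer_prod_X {R : Type*} [CommRing R] {S : Finset (Fin n)}
    (hS : ∀ i ∈ S, (i : ℕ) < n - k) (hkS : ∀ i : Fin n, (i : ℕ) < k → i ∈ S) :
    coeff (∑ i ∈ S, Finsupp.single i 1)
        (∑ c ∈ colGroup n k, ((Equiv.Perm.sign c : ℤ) •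
          rename (⇑c) (∑ r ∈ rowGroup n k, rename (⇑r) (∏ i ∈ S, X i : MvPolynomial _ R)))) =
      #((rowGroup n k).filter fun r : Equiv.Perm (Fin n) => S.image r = S) := by
  have hterm : ∀ c r : Equiv.Perm (Fin n),
      coeff (∑ i ∈ S, Finsupp.single i 1) (rename (⇑c ∘ ⇑r) (∏ i ∈ S, X i : MvPolynomial _ R)) =
        if S.image (⇑c ∘ ⇑r) = S then 1 else 0 := fun c r =>
    coeff_rename_prod_X (c.injective.comp r.injective) S S
  simp only [coeff_sum, coeff_smul, map_sum, rename_rename, hterm]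
  rw [sum_eq_single_of_mem 1 one_mem_colGroup]
  · simp
  · intro c hc hc1
    rw [sum_eq_zero fun r hr => if_neg fun h => hc1 (eq_one_of_image_eq hc hr hS hkS h),
      smul_zero]

end Tableau

theorem young_symmetrizer_nonzero_on_monomial_general
    {n k d : ℕ} (hk : k ≤ min d (n - d)) :
    (∑ c ∈ colGroup n k, ((Equiv.Perm.sign c : ℤ) •
        MvPolynomial.rename (⇑c)
          (∑ r ∈ rowGroup n k,
            MvPolynomial.rename (⇑r)
              ((∏ i ∈ Finset.univ.filter (fun i : Fin n => (i : ℕ) < d),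
                MvPolynomial.X i : MvPolynomial (Fin n) ℝ))))) ≠ 0 := by
  set D : Finset (Fin n) := univ.filter fun i : Fin n => (i : ℕ) < d
  have hD : ∀ i ∈ D, (i : ℕ) < n - k := fun i hi => by
    have := (mem_filter.mp hi).2
    have := i.isLt
    omega
  have hkD : ∀ i : Fin n, (i : ℕ) < k → i ∈ D := fun i hi =>
    mem_filter.mpr ⟨mem_univ _, by omega⟩
  have hstab : 0 < #((rowGroup n k).filter fun r : Equiv.Perm (Fin n) => D.image r = D) :=
    card_pos.mpr ⟨1, mem_filter.mpr ⟨one_mem_rowGroup, by simp⟩⟩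
  intro h
  have hcoeff := coeff_youngSymmetrizer_prod_X (R := ℝ) hD hkD
  rw [h, coeff_zero] at hcoeff
  exact hstab.ne (by exact_mod_cast hcoeff)

/-- For every `k` with `0 ≤ k ≤ min d (n-d)` the multilinear monomial
`M = x₀ x₁ ⋯ x_{d-1}` of degree `d` does not vanish under the Young symmetrizer
`Ŷ = Ĉ ∘ R̂` of the canonical standard Young tableau of shape `(n-k, k)`. -/
theorem young_symmetrizer_nonzero_on_monomial
    {n k d : ℕ} (hd : d ≤ n) (hk : k ≤ min d (n - d)) :
    (∑ c ∈ colGroup n k, ((Equiv.Perm.sign c : ℤ) •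
        MvPolynomial.rename (⇑c)
          (∑ r ∈ rowGroup n k,
            MvPolynomial.rename (⇑r)
              ((∏ i ∈ Finset.univ.filter (fun i : Fin n => (i : ℕ) < d),
                MvPolynomial.X i : MvPolynomial (Fin n) ℝ))))) ≠ 0 :=
  young_symmetrizer_nonzero_on_monomial_general hk
end

section
/- For 0 ≤ d ≤ n, the sum over k from 0 to min{d, n−d} of n!·(n−2k+1)/(k!·(n−k+1)!) equals the binomial coefficient C(n, d). -/
/-! Since `C(n, k+1) - C(n, k) = C(n, k) (n - 2k - 1) / (k + 1)`, the summand for `k + 1` is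
`C(n, k+1) - C(n, k)` whenever `2 (k + 1) ≤ n`, while the summand for `k = 0` is `1 = C(n, 0)`.
So the sum telescopes to `C(n, min d (n - d))`, which is `C(n, d)` by symmetry. -/

open Nat Finset

def twoRowDim (n k : ℕ) : ℚ :=
  ((n ! * (n - 2 * k + 1) : ℕ) : ℚ) / ((k ! * (n - k + 1)! : ℕ) : ℚ)

theorem twoRowDim_zero (n : ℕ) : twoRowDim n 0 = 1 := by
  have : ((n + 1)! : ℚ) ≠ 0 := by positivity
  simp only [twoRowDim, Nat.sub_zero, mul_zero, factorial_zero, one_mul]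
  rw [mul_comm, ← factorial_succ, div_self this]

-- Fails at `n = 2 * k + 1`, where the truncated factor `n - 2 * (k + 1) + 1` is `1`, not `0`.
theorem twoRowDim_succ {n k : ℕ} (h : 2 * (k + 1) ≤ n) :
    twoRowDim n (k + 1) = n.choose (k + 1) - n.choose k := by
  obtain ⟨j, rfl⟩ : ∃ j, n = 2 * k + 2 + j := ⟨n - (2 * k + 2), by omega⟩
  rw [twoRowDim, cast_choose ℚ (by omega : k + 1 ≤ 2 * k + 2 + j),
    cast_choose ℚ (by omega : k ≤ 2 * k + 2 + j),
    show 2 * k + 2 + j - 2 * (k + 1) + 1 = j + 1 by omega,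
    show 2 * k + 2 + j - (k + 1) + 1 = k + j + 2 by omega,
    show 2 * k + 2 + j - (k + 1) = k + j + 1 by omega,
    show 2 * k + 2 + j - k = k + j + 2 by omega,
    factorial_succ (k + j + 1), factorial_succ k]
  push_cast
  field_simp
  ring

theorem sum_range_twoRowDim {n m : ℕ} (h : 2 * m ≤ n) :
    ∑ k ∈ range (m + 1), twoRowDim n k = n.choose m := by
  rw [sum_range_succ', twoRowDim_zero,
    sum_congr rfl fun k hk => twoRowDim_succ (by grind),
    sum_range_sub (fun k => (n.choose k : ℚ)), choose_zero_right]
  ring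

/-- The dimensions of the irreducible representations of `S_n` labeled by the
two-row partitions `(n-k, k)`, for `0 ≤ k ≤ min d (n-d)`, sum to the binomial
coefficient `C(n, d)`. -/
theorem sum_two_row_dims_eq_choose (n d : ℕ) (hd : d ≤ n) :
    ∑ k ∈ Finset.range (min d (n - d) + 1),
        ((n.factorial * (n - 2 * k + 1) : ℕ) : ℚ) /
          ((k.factorial * (n - k + 1).factorial : ℕ) : ℚ)
      = (n.choose d : ℚ) := by
  have choose_min : n.choose (min d (n - d)) = n.choose d := by
    rcases le_total d (n - d) with h | h
    · rw [min_eq_left h]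
    · rw [min_eq_right h, choose_symm hd]
  rw [← choose_min]
  exact sum_range_twoRowDim (by omega)
end

section
/- Suppose the eigenvalue λ of a positive semidefinite kernel operator with unit trace belongs to an eigenspace carrying an irrep of S_L labeled by (L−k, k). Then λ ≤ k!·(L−k+1)! / (L!·(L−2k+1)), and hence the number of samples N = σ²/λ needed to reach learnability 1/2 satisfies N ≥ σ²·L!·(L−2k+1)/(k!·(L−k+1)!) = Ω(L^k). -/
/-!
Conjugation by `diagonal √p` turns the weighted kernel operator `K * diagonal p` into the positive
semidefinite matrix `√p K √p`, which has the same trace `∑ x, p x * K x x` and, as `λ ≠ 0`,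
receives the `λ`-eigenfunctions as linearly independent eigenvectors. Computing the trace of a
positive operator in an orthonormal basis extending one of a space of `λ`-eigenvectors
gives `λ · dim ≤ trace ≤ 1`. Finally `dim = C(L, k) - C(L, k - 1)`, so the natural-number
division defining it in the statement is exact.
-/

open Module Finset Nat
open scoped ComplexOrder InnerProductSpace Matrix

theorem LinearMap.IsPositive.mul_finrank_le_trace_of_le_eigenspace {𝕜 E : Type*} [RCLike 𝕜]
    [NormedAddCommGroup E] [InnerProductSpace 𝕜 E] [FiniteDimensional 𝕜 E]
    {T : E →ₗ[𝕜] E} (hT : T.IsPositive) {μ : 𝕜} {W : Submodule 𝕜 E}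
    (hW : W ≤ End.eigenspace T μ) :
    μ * finrank 𝕜 W ≤ LinearMap.trace 𝕜 E T := by
  classical
  let v : Fin (finrank 𝕜 W) → E := fun i => (stdOrthonormalBasis 𝕜 W i : E)
  have hv : Orthonormal 𝕜 v :=
    (stdOrthonormalBasis 𝕜 W).orthonormal.comp_linearIsometry W.subtypeₗᵢ
  have hvinj : Function.Injective v := hv.linearIndependent.injective
  have hTv (i) : T (v i) = μ • v i := End.mem_eigenspace_iff.mp (hW (stdOrthonormalBasis 𝕜 W i).2)
  obtain ⟨u, b, hvu, hb⟩ :=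
    ((orthonormal_subtype_range hvinj).mpr hv).exists_orthonormalBasis_extension
  have himage : univ.image v ⊆ u := by
    rintro _ hx
    obtain ⟨i, -, rfl⟩ := mem_image.mp hx
    exact hvu ⟨i, rfl⟩
  calc μ * finrank 𝕜 W = ∑ i, ⟪v i, T (v i)⟫_𝕜 := by
        simp [hTv, inner_smul_right, hv.1, mul_comm]
    _ = ∑ x ∈ univ.image v, ⟪x, T x⟫_𝕜 := by rw [sum_image fun _ _ _ _ h => hvinj h]
    _ ≤ ∑ x ∈ u, ⟪x, T x⟫_𝕜 :=
        sum_le_sum_of_subset_of_nonneg himage fun x _ _ => hT.inner_nonneg_right x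
    _ = LinearMap.trace 𝕜 E T := by rw [T.trace_eq_sum_inner b, hb, ← sum_coe_sort u]

theorem Matrix.PosSemidef.mul_card_le_trace_of_linearIndependent {𝕜 n ι : Type*} [RCLike 𝕜]
    [Fintype n] [DecidableEq n] [Fintype ι] {A : Matrix n n 𝕜} (hA : A.PosSemidef) {μ : 𝕜}
    {v : ι → n → 𝕜} (hv : LinearIndependent 𝕜 v) (hAv : ∀ i, A *ᵥ v i = μ • v i) :
    μ * Fintype.card ι ≤ A.trace := by
  let w : ι → EuclideanSpace 𝕜 n := fun i => WithLp.toLp 2 (v i)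
  have hw : LinearIndependent 𝕜 w :=
    hv.map' (WithLp.linearEquiv 2 𝕜 (n → 𝕜)).symm.toLinearMap (LinearEquiv.ker _)
  have hspan : Submodule.span 𝕜 (Set.range w) ≤ End.eigenspace A.toEuclideanLin μ := by
    rw [Submodule.span_le]
    rintro _ ⟨i, rfl⟩
    exact End.mem_eigenspace_iff.mpr (congrArg (WithLp.toLp 2) (hAv i))
  have := (isPositive_toEuclideanLin_iff.mpr hA).mul_finrank_le_trace_of_le_eigenspace hspan
  rwa [finrank_span_eq_card hw, toEuclideanLin_eq_toLin_orthonormal, trace_toLin_eq] at this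

theorem Matrix.PosSemidef.mul_card_le_trace_mul_diagonal {n ι : Type*} [Fintype n]
    [DecidableEq n] [Fintype ι] {K : Matrix n n ℝ} (hK : K.PosSemidef) {p : n → ℝ} (hp : 0 ≤ p)
    {μ : ℝ} (hμ : μ ≠ 0) {u : ι → n → ℝ} (hu : LinearIndependent ℝ u)
    (hKu : ∀ i, (K * diagonal p) *ᵥ u i = μ • u i) :
    μ * Fintype.card ι ≤ (K * diagonal p).trace := by
  set D : Matrix n n ℝ := diagonal fun x => √(p x)
  have hDD : D * D = diagonal p := by
    rw [diagonal_mul_diagonal]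
    exact congrArg diagonal (funext fun x => Real.mul_self_sqrt (hp x))
  have hDKD : (D * K * D).PosSemidef := by
    simpa [D, diagonal_conjTranspose] using hK.conjTranspose_mul_mul_same D
  have hKD (i) : (K * D) *ᵥ (D *ᵥ u i) = μ • u i := by
    rw [mulVec_mulVec, Matrix.mul_assoc, hDD, hKu]
  have hDu : LinearIndependent ℝ fun i => D *ᵥ u i :=
    LinearIndependent.of_comp (μ⁻¹ • (K * D).mulVecLin) <| by
      convert hu using 1
      funext i
      simp only [Function.comp_apply, LinearMap.smul_apply, mulVecLin_apply, hKD, smul_smul,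
        inv_mul_cancel₀ hμ, one_smul]
  have := hDKD.mul_card_le_trace_of_linearIndependent hDu fun i => by
    rw [Matrix.mul_assoc, ← mulVec_mulVec, hKD, mulVec_smul]
  rwa [Matrix.mul_assoc, trace_mul_comm, Matrix.mul_assoc, hDD] at this

theorem Nat.choose_succ_sub_choose_mul_factorial_mul_factorial {n k : ℕ} (hk : k < n) :
    (n.choose (k + 1) - n.choose k) * ((k + 1)! * (n - k)!) = n ! * (n - 2 * k - 1) := by
  have hsucc : n.choose (k + 1) * ((k + 1)! * (n - k)!) = n ! * (n - k) := by
    rw [← choose_mul_factorial_mul_factorial hk, show n - k = n - (k + 1) + 1 by omega,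
      factorial_succ (n - (k + 1))]
    ring
  have hself : n.choose k * ((k + 1)! * (n - k)!) = n ! * (k + 1) := by
    rw [← choose_mul_factorial_mul_factorial hk.le, factorial_succ]
    ring
  rw [Nat.sub_mul, hsucc, hself, ← Nat.mul_sub]
  congr 1
  omega

theorem Nat.factorial_mul_factorial_dvd_factorial_mul {n k : ℕ} (hk : 2 * k ≤ n) :
    k ! * (n - k + 1)! ∣ n ! * (n - 2 * k + 1) := by
  cases k with
  | zero => simp [factorial_succ, Nat.mul_comm]
  | succ k =>
    refine ⟨n.choose (k + 1) - n.choose k, ?_⟩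
    rw [show n - (k + 1) + 1 = n - k by omega, show n - 2 * (k + 1) + 1 = n - 2 * k - 1 by omega,
      ← choose_succ_sub_choose_mul_factorial_mul_factorial (by omega), Nat.mul_comm]

theorem mul_card_le_sum_weight_mul_kernel_diag {X ι : Type*} [Fintype X] [Fintype ι]
    {p : X → ℝ} (hp : ∀ x, 0 ≤ p x) {ker : X → X → ℝ} (hsymm : ∀ x y, ker x y = ker y x)
    (hpsd : ∀ u : X → ℝ, 0 ≤ ∑ x, ∑ y, u x * ker x y * u y) {μ : ℝ} (hμ : μ ≠ 0)
    {u : ι → X → ℝ} (hu : LinearIndependent ℝ u)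
    (heig : ∀ i x, ∑ y, p y * ker x y * u i y = μ * u i x) :
    μ * Fintype.card ι ≤ ∑ x, p x * ker x x := by
  classical
  have hK : (Matrix.of ker).PosSemidef := by
    refine .of_dotProduct_mulVec_nonneg (funext₂ fun x y => hsymm y x) fun w => ?_
    simpa [dotProduct, Matrix.mulVec, Finset.mul_sum, mul_assoc] using hpsd w
  have hKu (i) : (Matrix.of ker * Matrix.diagonal p) *ᵥ u i = μ • u i := by
    funext x
    simpa [Matrix.mulVec, dotProduct, mul_comm, mul_left_comm] using heig i x
  simpa [Matrix.trace, mul_comm] using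
    hK.mul_card_le_trace_mul_diagonal hp hμ hu hKu

theorem scaling_law_bound_general
    {X : Type*} [Fintype X] (p : X → ℝ) (hp : ∀ x, 0 ≤ p x)
    (ker : X → X → ℝ) (hsymm : ∀ x y, ker x y = ker y x)
    (hpsd : ∀ u : X → ℝ, 0 ≤ ∑ x, ∑ y, u x * ker x y * u y)
    (htrace : ∑ x, p x * ker x x ≤ 1)
    (L k : ℕ) (hk : 2 * k ≤ L) (lam : ℝ)
    (u : Fin (L.factorial * (L - 2 * k + 1) / (k.factorial * (L - k + 1).factorial))
          → X → ℝ)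
    (hli : LinearIndependent ℝ u)
    (heig : ∀ i x, ∑ y, p y * ker x y * u i y = lam * u i x) :
    lam ≤ ((k.factorial * (L - k + 1).factorial : ℕ) : ℝ) /
        ((L.factorial * (L - 2 * k + 1) : ℕ) : ℝ) ∧
    (0 < lam → ∀ σsq : ℝ, 0 < σsq →
      σsq * (((L.factorial * (L - 2 * k + 1) : ℕ) : ℝ) /
          ((k.factorial * (L - k + 1).factorial : ℕ) : ℝ)) ≤ σsq / lam) := by
  set N := L.factorial * (L - 2 * k + 1)
  set D := k.factorial * (L - k + 1).factorial
  have hdvd : D ∣ N := Nat.factorial_mul_factorial_dvd_factorial_mul hk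
  have hD : (0 : ℝ) < D := by positivity
  have hN : (0 : ℝ) < N := by positivity
  have hsamples (hlam : 0 < lam) : (N / D : ℝ) ≤ 1 / lam := by
    have := (mul_card_le_sum_weight_mul_kernel_diag hp hsymm hpsd hlam.ne' hli heig).trans htrace
    rw [Fintype.card_fin, Nat.cast_div hdvd hD.ne'] at this
    exact (le_div_iff₀' hlam).mpr this
  refine ⟨?_, fun hlam σsq hσ => ?_⟩
  · rcases le_or_gt lam 0 with hlam | hlam
    · exact hlam.trans (by positivity)
    · have := hsamples hlam
      rw [div_le_div_iff₀ hD hlam] at this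
      rw [le_div_iff₀ hN]
      linarith
  · calc σsq * (N / D : ℝ) ≤ σsq * (1 / lam) := mul_le_mul_of_nonneg_left (hsamples hlam) hσ.le
      _ = σsq / lam := mul_one_div _ _

/-- Suppose an eigenvalue `λ` of a positive semidefinite kernel operator with
unit trace (on a finite probability space) belongs to an eigenspace carrying an
irrep of `S_L` labeled by `(L-k, k)`, hence of dimension
`dim = L!·(L-2k+1)/(k!·(L-k+1)!)` — witnessed by `dim` linearly independent
eigenfunctions.  Then `λ ≤ 1/dim = k!·(L-k+1)!/(L!·(L-2k+1))`, and hence the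
number of samples `N = σ²/λ` needed to reach learnability `1/2` satisfies
`N ≥ σ²·L!·(L-2k+1)/(k!·(L-k+1)!) = Ω(L^k)`. -/
theorem scaling_law_bound
    {X : Type*} [Fintype X] (p : X → ℝ) (hp : ∀ x, 0 ≤ p x)
    (hp1 : ∑ x, p x = 1) (ker : X → X → ℝ) (hsymm : ∀ x y, ker x y = ker y x)
    (hpsd : ∀ u : X → ℝ, 0 ≤ ∑ x, ∑ y, u x * ker x y * u y)
    (htrace : ∑ x, p x * ker x x ≤ 1)
    (L k : ℕ) (hk : 2 * k ≤ L) (lam : ℝ)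
    (u : Fin (L.factorial * (L - 2 * k + 1) / (k.factorial * (L - k + 1).factorial))
          → X → ℝ)
    (hli : LinearIndependent ℝ u)
    (heig : ∀ i x, ∑ y, p y * ker x y * u i y = lam * u i x) :
    lam ≤ ((k.factorial * (L - k + 1).factorial : ℕ) : ℝ) /
        ((L.factorial * (L - 2 * k + 1) : ℕ) : ℝ) ∧
    (0 < lam → ∀ σsq : ℝ, 0 < σsq →
      σsq * (((L.factorial * (L - 2 * k + 1) : ℕ) : ℝ) /
          ((k.factorial * (L - k + 1).factorial : ℕ) : ℝ)) ≤ σsq / lam) :=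
  scaling_law_bound_general p hp ker hsymm hpsd htrace L k hk lam u hli heig
end
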